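/- arXiv:2506.24076 — 6 statements merged into one kernel-verified Lean document; each statement's English description precedes it below -/
import Mathlib

section
/- Let α ∈ ℕ and let v, s, t : ℕ → ℝ be sequences such that for every k ∈ ℕ: v(k+α+1) ≤ v(k) − s(k), v(k) ≥ 0, and 0 ≤ t(k) ≤ s(k). Then for every k ∈ ℕ, min_{0 ≤ i ≤ k} t(i) ≤ (∑_{j=0}^{α} v(j)) / (k+1); in particular the best value of t over the first k+1 indices is O(1/k). -/
/-- `O(1/k)` ergodic-type rate from the telescoping-summation argument in the
case `ρ = 1` of a quadratic Lyapunov inequality, with overlap parameter `α`. -/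
theorem lyapunov_best_iterate_rate
    (α : ℕ) (v s t : ℕ → ℝ)
    (hV : ∀ k : ℕ, v (k + α + 1) ≤ v k - s k)
    (hv0 : ∀ k : ℕ, 0 ≤ v k)
    (ht0 : ∀ k : ℕ, 0 ≤ t k)
    (hts : ∀ k : ℕ, t k ≤ s k) :
    ∀ k : ℕ,
      (Finset.range (k + 1)).inf' (by simp) t ≤
        (∑ j ∈ Finset.range (α + 1), v j) / ((k : ℝ) + 1) := by
  intro k
  set W : ℕ → ℝ := fun n => ∑ j ∈ Finset.range (α + 1), v (n + j) with hW
  have hWnn : ∀ n, 0 ≤ W n := fun n =>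
    Finset.sum_nonneg fun j _ => hv0 _
  have hstep : ∀ n, W (n + 1) ≤ W n - s n := by
    intro n
    have h1 : W n = (∑ j ∈ Finset.range α, v (n + (j + 1))) + v (n + 0) := by
      simp only [hW]
      rw [Finset.sum_range_succ']
    have h2 : W (n + 1) = (∑ j ∈ Finset.range α, v (n + 1 + j)) + v (n + 1 + α) := by
      simp only [hW]
      rw [Finset.sum_range_succ]
    have h3 : ∀ j, n + (j + 1) = n + 1 + j := by omega
    have h4 : (∑ j ∈ Finset.range α, v (n + (j + 1)))
        = ∑ j ∈ Finset.range α, v (n + 1 + j) := by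
      exact Finset.sum_congr rfl fun j _ => by rw [h3]
    have h5 := hV n
    have h6 : n + 1 + α = n + α + 1 := by omega
    rw [h2, h6]
    rw [h1, h4] 
    simp at h5 ⊢
    linarith
  have key : ∀ m : ℕ, (∑ i ∈ Finset.range m, s i) + W m ≤ W 0 := by
    intro m
    induction m with
    | zero => simp
    | succ n ih =>
      rw [Finset.sum_range_succ]
      have := hstep n
      linarith
  have hsum : (∑ i ∈ Finset.range (k + 1), t i) ≤ W 0 := by
    have h1 : (∑ i ∈ Finset.range (k + 1), t i) ≤ ∑ i ∈ Finset.range (k + 1), s i :=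
      Finset.sum_le_sum fun i _ => hts i
    have := key (k + 1)
    have := hWnn (k + 1)
    linarith
  have hW0 : W 0 = ∑ j ∈ Finset.range (α + 1), v j := by
    simp [hW]
  rw [le_div_iff₀ (by positivity : (0:ℝ) < (k : ℝ) + 1)]
  have hcard : ((k : ℝ) + 1) = ((Finset.range (k + 1)).card : ℝ) := by
    simp
  have hmin : (Finset.range (k + 1)).card •
      ((Finset.range (k + 1)).inf' (by simp) t) ≤ ∑ i ∈ Finset.range (k + 1), t i :=
    Finset.card_nsmul_le_sum _ _ _ fun i hi => Finset.inf'_le t hi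
  rw [nsmul_eq_mul] at hmin
  rw [hW0] at hsum
  calc (Finset.range (k + 1)).inf' (by simp) t * ((k : ℝ) + 1)
      = ((Finset.range (k + 1)).card : ℝ) * (Finset.range (k + 1)).inf' (by simp) t := by
        rw [hcard]; ring
    _ ≤ ∑ i ∈ Finset.range (k + 1), t i := hmin
    _ ≤ _ := hsum
end

section
/- Let α ∈ ℕ and let v, s, t : ℕ → ℝ be sequences such that for every k ∈ ℕ: v(k+α+1) ≤ v(k) − s(k), v(k) ≥ 0, 0 ≤ t(k) ≤ s(k), and additionally s(k+1) ≤ s(k) (s is nonincreasing). Then (k+1)·s(k) → 0 as k → ∞, and hence also (k+1)·t(k) → 0 as k → ∞; i.e., the last-iterate quantities s(k) and t(k) are o(1/k). -/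
/-- Last-iterate `o(1/k)` convergence from a quadratic Lyapunov inequality with
`ρ = 1` together with the monotonicity requirement (C4) on the residuals. -/
theorem lyapunov_last_iterate_little_o
    (α : ℕ) (v s t : ℕ → ℝ)
    (hV : ∀ k : ℕ, v (k + α + 1) ≤ v k - s k)
    (hv0 : ∀ k : ℕ, 0 ≤ v k)
    (ht0 : ∀ k : ℕ, 0 ≤ t k)
    (hts : ∀ k : ℕ, t k ≤ s k)
    (hmono : ∀ k : ℕ, s (k + 1) ≤ s k) :
    Filter.Tendsto (fun k : ℕ => ((k : ℝ) + 1) * s k) Filter.atTop (nhds 0) ∧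
    Filter.Tendsto (fun k : ℕ => ((k : ℝ) + 1) * t k) Filter.atTop (nhds 0) := by
  have hs0 : ∀ k, 0 ≤ s k := fun k => (ht0 k).trans (hts k)
  -- per-residue telescoping bound
  have hres : ∀ r n : ℕ, ∑ j ∈ Finset.range n, s (j * (α + 1) + r)
      ≤ v r - v (n * (α + 1) + r) := by
    intro r n
    induction n with
    | zero => simp
    | succ n ih =>
      rw [Finset.sum_range_succ]
      have h1 := hV (n * (α + 1) + r)
      have he : n * (α + 1) + r + α + 1 = (n + 1) * (α + 1) + r := by ring
      rw [he] at h1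
      linarith
  -- block decomposition of partial sums
  have hblock : ∀ N : ℕ, ∑ k ∈ Finset.range (N * (α + 1)), s k
      = ∑ j ∈ Finset.range N, ∑ r ∈ Finset.range (α + 1), s (j * (α + 1) + r) := by
    intro N
    induction N with
    | zero => simp
    | succ N ih =>
      have he : (N + 1) * (α + 1) = N * (α + 1) + (α + 1) := by ring
      rw [he, Finset.sum_range_add s (N * (α + 1)) (α + 1), ih,
        Finset.sum_range_succ (fun j => ∑ r ∈ Finset.range (α + 1), s (j * (α + 1) + r)) N]
  have hbound : ∀ N : ℕ, ∑ k ∈ Finset.range N, s k ≤ ∑ r ∈ Finset.range (α + 1), v r := by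
    intro N
    have h1 : ∑ k ∈ Finset.range N, s k ≤ ∑ k ∈ Finset.range (N * (α + 1)), s k := by
      apply Finset.sum_le_sum_of_subset_of_nonneg
      · exact Finset.range_subset_range.2 (Nat.le_mul_of_pos_right N (Nat.succ_pos α))
      · intro i _ _; exact hs0 i
    rw [hblock N] at h1
    refine h1.trans ?_
    rw [Finset.sum_comm]
    refine Finset.sum_le_sum fun r _ => ?_
    calc ∑ j ∈ Finset.range N, s (j * (α + 1) + r) ≤ v r - v (N * (α + 1) + r) := hres r N
      _ ≤ v r := by linarith [hv0 (N * (α + 1) + r)]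
  have hsum : Summable s := summable_of_sum_range_le hs0 hbound
  have sAnti : Antitone s := antitone_nat_of_succ_le hmono
  -- partial sums converge
  set T : ℕ → ℝ := fun n => ∑ k ∈ Finset.range n, s k with hT
  have hTconv : Filter.Tendsto T Filter.atTop (nhds (∑' k, s k)) := hsum.hasSum.tendsto_sum_nat
  have hfirst : Filter.Tendsto (fun k : ℕ => ((k : ℝ) + 1) * s k) Filter.atTop (nhds 0) := by
    rw [Metric.tendsto_atTop]
    intro ε hε
    rw [Metric.tendsto_atTop] at hTconv
    obtain ⟨N, hN⟩ := hTconv (ε / 8) (by linarith)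
    refine ⟨2 * N + 1, fun n hn => ?_⟩
    have hNn : N ≤ n := by omega
    -- (n - N) * s n ≤ T n - T N
    have hcard : ((n - N : ℕ) : ℝ) * s n ≤ T n - T N := by
      have h1 : ∑ k ∈ Finset.Ico N n, s n ≤ ∑ k ∈ Finset.Ico N n, s k :=
        Finset.sum_le_sum fun k hk => sAnti (Finset.mem_Ico.1 hk).2.le
      rw [Finset.sum_const, Nat.card_Ico, nsmul_eq_mul] at h1
      have h2 : ∑ k ∈ Finset.Ico N n, s k = T n - T N := by
        rw [hT]
        rw [Finset.sum_Ico_eq_sub _ hNn]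
      linarith
    have hTn := hN n hNn
    have hTN := hN N le_rfl
    rw [Real.dist_eq] at hTn hTN
    have hdiff : T n - T N ≤ ε / 4 := by
      have := abs_lt.1 hTn
      have := abs_lt.1 hTN
      linarith [this.1, this.2]
    have hsnn := hs0 n
    have hcast : (2 : ℝ) * ((n - N : ℕ) : ℝ) ≥ (n : ℝ) + 1 := by
      have : (n - N : ℕ) = n - N := rfl
      have h3 : n + 1 ≤ 2 * (n - N) := by omega
      calc (2 : ℝ) * ((n - N : ℕ) : ℝ) = ((2 * (n - N) : ℕ) : ℝ) := by push_cast; ring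
        _ ≥ ((n + 1 : ℕ) : ℝ) := by exact_mod_cast Nat.cast_le.2 h3
        _ = (n : ℝ) + 1 := by push_cast; ring
    have hmul : ((n : ℝ) + 1) * s n ≤ 2 * (((n - N : ℕ) : ℝ) * s n) := by
      rw [← mul_assoc]
      exact mul_le_mul_of_nonneg_right hcast hsnn
    have hnn : 0 ≤ ((n : ℝ) + 1) * s n := by positivity
    rw [Real.dist_eq, sub_zero, abs_of_nonneg hnn]
    linarith
  refine ⟨hfirst, ?_⟩
  refine squeeze_zero (fun n => mul_nonneg (by positivity) (ht0 n)) (fun n => ?_) hfirst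
  exact mul_le_mul_of_nonneg_left (hts n) (by positivity)
end

section
/- Let H be a real Hilbert space, let μ, L ∈ ℝ with μ < L and L > 0, and let {(y_i, F_i, u_i)}_{i ∈ J} be a finite family of triplets in H × ℝ × H. Then the following are equivalent: (i) there exists a Fréchet differentiable function f : H → ℝ such that x ↦ f(x) − (μ/2)‖x‖² is convex and x ↦ (L/2)‖x‖² − f(x) is convex, and f(y_i) = F_i and ∇f(y_i) = u_i for every i ∈ J; (ii) for all i, j ∈ J, F_i ≥ F_j + ⟨u_j, y_i − y_j⟩ + (μ/2)‖y_i − y_j‖² + (1/(2(L−μ)))‖u_i − u_j − μ(y_i − y_j)‖². -/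
/-!
Subtracting `μ/2 ‖·‖²` turns the data `(y i, F i, u i)` into
`(y i, F i - μ/2 ‖y i‖², u i - μ • y i)` and the class `F_{μ,L}` into `F_{0,L-μ}`. For
differentiable `f` the two convexity conditions are the first-order bounds
`f x + ⟪∇f x, z - x⟫ + μ/2 ‖z - x‖² ≤ f z ≤ f x + ⟪∇f x, z - x⟫ + L/2 ‖z - x‖²`, and conversely
such bounds force differentiability.

For `μ = 0`, necessity follows by evaluating the lower bound at `y j` and the upper bound at `y i`
in the point `y i - L⁻¹ • (u i - u j)`. For sufficiency, let `f x` be the maximum over the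
standard simplex of `Σ α j (F j + ⟪u j, x - y j⟫ + ‖u j‖² / (2L)) - ‖Σ α j • u j‖² / (2L)`
(on the simplex, the `‖·‖²` terms add up to the variance of `u` under `α`, divided by `2L`).
It is a maximum of affine functions of `x`, hence convex; the upper bound comes from the
`1/L`-strong concavity of the objective in `Σ α j • u j` at its maximizer; and the interpolation
conditions say precisely that at `y i` the vertex `Pi.single i 1` is a maximizer, and that every
maximizer has `Σ α j • u j = u i`.
-/

open scoped RealInnerProductSpace
open Filter Set Topology Asymptotics

section

variable {H : Type*} [NormedAddCommGroup H] [InnerProductSpace ℝ H]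

theorem inner_sub_smul_sub (c : ℝ) (v x z : H) :
    ⟪v - c • x, z - x⟫ = ⟪v, z - x⟫ + c / 2 * (‖z - x‖ ^ 2 - ‖z‖ ^ 2 + ‖x‖ ^ 2) := by
  rw [norm_sub_sq_real, inner_sub_left, real_inner_smul_left, inner_sub_right x,
    real_inner_self_eq_norm_sq, real_inner_comm z x]
  ring

theorem real_inner_le_div_add_mul_norm_sq {L : ℝ} (hL : 0 < L) (w d : H) :
    ⟪w, d⟫ ≤ ‖w‖ ^ 2 / (2 * L) + L / 2 * ‖d‖ ^ 2 := by
  have := real_inner_le_norm w d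
  rw [div_add' _ _ _ (by positivity), le_div_iff₀ (by positivity)]
  nlinarith [sq_nonneg (‖w‖ - L * ‖d‖)]

theorem convexOn_univ_of_forall_add_inner_le {f : H → ℝ} {g : H → H}
    (h : ∀ x z, f x + ⟪g x, z - x⟫ ≤ f z) : ConvexOn ℝ univ f := by
  refine ⟨convex_univ, fun x _ z _ a b ha hb hab => ?_⟩
  set w := a • x + b • z
  have hw : a • (x - w) + b • (z - w) = 0 := by
    rw [show a • (x - w) + b • (z - w) = w - (a + b) • w by module, hab, one_smul, sub_self]
  have hinner : a * ⟪g w, x - w⟫ + b * ⟪g w, z - w⟫ = 0 := by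
    rw [← real_inner_smul_right, ← real_inner_smul_right, ← inner_add_right, hw,
      inner_zero_right]
  have hfw : a * f w + b * f w = f w := by rw [← add_mul, hab, one_mul]
  simp only [smul_eq_mul]
  nlinarith [mul_le_mul_of_nonneg_left (h w x) ha, mul_le_mul_of_nonneg_left (h w z) hb]

theorem add_inner_add_norm_sq_le_of_bounds {L : ℝ} (hL : 0 < L) {f : H → ℝ} {x z v w : H}
    (hlo : ∀ p, f x + ⟪v, p - x⟫ ≤ f p)
    (hup : ∀ p, f p ≤ f z + ⟪w, p - z⟫ + L / 2 * ‖p - z‖ ^ 2) :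
    f x + ⟪v, z - x⟫ + 1 / (2 * L) * ‖w - v‖ ^ 2 ≤ f z := by
  have hlo := hlo (z - L⁻¹ • (w - v))
  have hup := hup (z - L⁻¹ • (w - v))
  rw [show z - L⁻¹ • (w - v) - x = (z - x) - L⁻¹ • (w - v) by abel, inner_sub_right,
    real_inner_smul_right] at hlo
  rw [show z - L⁻¹ • (w - v) - z = -(L⁻¹ • (w - v)) by abel, inner_neg_right,
    real_inner_smul_right, norm_neg, norm_smul, mul_pow, Real.norm_eq_abs, sq_abs] at hup
  have hvw : L⁻¹ * ⟪w, w - v⟫ - L⁻¹ * ⟪v, w - v⟫ = L⁻¹ * ‖w - v‖ ^ 2 := by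
    rw [← mul_sub, ← inner_sub_left, real_inner_self_eq_norm_sq]
  have hL' : L / 2 * (L⁻¹ ^ 2 * ‖w - v‖ ^ 2) =
      L⁻¹ * ‖w - v‖ ^ 2 - 1 / (2 * L) * ‖w - v‖ ^ 2 := by
    field_simp
    ring
  linarith

variable [CompleteSpace H]

theorem hasGradientAt_of_quadratic_bounds {f : H → ℝ} {v x : H} {a b : ℝ}
    (hlo : ∀ z, f x + ⟪v, z - x⟫ + a / 2 * ‖z - x‖ ^ 2 ≤ f z)
    (hup : ∀ z, f z ≤ f x + ⟪v, z - x⟫ + b / 2 * ‖z - x‖ ^ 2) : HasGradientAt f v x := by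
  rw [hasGradientAt_iff_isLittleO_nhds_zero]
  refine IsBigO.trans_isLittleO (g := fun h => ‖h‖ ^ 2) ?_ (isLittleO_norm_pow_id one_lt_two)
  refine IsBigO.of_bound ((|a| + |b|) / 2) (Eventually.of_forall fun h => ?_)
  have hlo := hlo (x + h)
  have hup := hup (x + h)
  rw [add_sub_cancel_left] at hlo hup
  rw [Real.norm_eq_abs, Real.norm_eq_abs, abs_of_nonneg (sq_nonneg ‖h‖), abs_le]
  have hsq := sq_nonneg ‖h‖
  have ha := mul_le_mul_of_nonneg_right (neg_abs_le a) hsq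
  have hb := mul_le_mul_of_nonneg_right (le_abs_self b) hsq
  constructor <;> nlinarith [mul_nonneg (abs_nonneg a) hsq, mul_nonneg (abs_nonneg b) hsq]

theorem hasGradientAt_half_mul_norm_sq (c : ℝ) (x : H) :
    HasGradientAt (fun z => c / 2 * ‖z‖ ^ 2) (c • x) x := by
  have h (z : H) : c / 2 * ‖x‖ ^ 2 + ⟪c • x, z - x⟫ + c / 2 * ‖z - x‖ ^ 2 = c / 2 * ‖z‖ ^ 2 := by
    rw [real_inner_smul_left, norm_sub_sq_real, inner_sub_right, real_inner_self_eq_norm_sq,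
      real_inner_comm z x]
    ring
  exact hasGradientAt_of_quadratic_bounds (fun z => (h z).le) (fun z => (h z).ge)

theorem HasGradientAt.sub {f₁ f₂ : H → ℝ} {v₁ v₂ x : H} (h₁ : HasGradientAt f₁ v₁ x)
    (h₂ : HasGradientAt f₂ v₂ x) : HasGradientAt (fun z => f₁ z - f₂ z) (v₁ - v₂) x := by
  rw [hasGradientAt_iff_hasFDerivAt, map_sub]
  exact h₁.hasFDerivAt.sub h₂.hasFDerivAt

theorem HasGradientAt.neg {f : H → ℝ} {v x : H} (h : HasGradientAt f v x) :
    HasGradientAt (fun z => -f z) (-v) x := by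
  rw [hasGradientAt_iff_hasFDerivAt, map_neg]
  exact h.hasFDerivAt.neg

theorem ConvexOn.add_inner_le_of_hasGradientAt {f : H → ℝ} (hf : ConvexOn ℝ univ f) {v x : H}
    (hv : HasGradientAt f v x) (z : H) : f x + ⟪v, z - x⟫ ≤ f z := by
  let line : ℝ →ᵃ[ℝ] H := AffineMap.lineMap x z
  have hv' : HasFDerivAt f (InnerProductSpace.toDual ℝ H v) (line 0) := by
    simpa [line] using hv.hasFDerivAt
  have hderiv : HasDerivAt (f ∘ line) ⟪v, z - x⟫ 0 := by
    simpa using hv'.comp_hasDerivAt 0 AffineMap.hasDerivAt_lineMap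
  have := (hf.comp_affineMap line).le_slope_of_hasDerivAt (mem_univ 0) (mem_univ 1) one_pos
    hderiv
  simp only [slope_def_field, Function.comp_apply, AffineMap.lineMap_apply_one,
    AffineMap.lineMap_apply_zero, sub_zero, div_one, line] at this
  linarith

theorem convexOn_univ_iff_forall_add_inner_le {f : H → ℝ} {g : H → H}
    (hf : ∀ x, HasGradientAt f (g x) x) :
    ConvexOn ℝ univ f ↔ ∀ x z, f x + ⟪g x, z - x⟫ ≤ f z :=
  ⟨fun h x z => h.add_inner_le_of_hasGradientAt (hf x) z, convexOn_univ_of_forall_add_inner_le⟩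

theorem convexOn_sub_half_mul_norm_sq_iff {f : H → ℝ} {g : H → H}
    (hf : ∀ x, HasGradientAt f (g x) x) (c : ℝ) :
    ConvexOn ℝ univ (fun x => f x - c / 2 * ‖x‖ ^ 2) ↔
      ∀ x z, f x + ⟪g x, z - x⟫ + c / 2 * ‖z - x‖ ^ 2 ≤ f z := by
  rw [convexOn_univ_iff_forall_add_inner_le
    fun x => (hf x).sub (hasGradientAt_half_mul_norm_sq c x)]
  refine forall₂_congr fun x z => ?_
  rw [inner_sub_smul_sub]
  constructor <;> intro h <;> linarith

theorem convexOn_half_mul_norm_sq_sub_iff {f : H → ℝ} {g : H → H}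
    (hf : ∀ x, HasGradientAt f (g x) x) (c : ℝ) :
    ConvexOn ℝ univ (fun x => c / 2 * ‖x‖ ^ 2 - f x) ↔
      ∀ x z, f z ≤ f x + ⟪g x, z - x⟫ + c / 2 * ‖z - x‖ ^ 2 := by
  rw [show (fun x => c / 2 * ‖x‖ ^ 2 - f x) = fun x => -f x - -c / 2 * ‖x‖ ^ 2 by ext; ring,
    convexOn_sub_half_mul_norm_sq_iff (fun x => (hf x).neg)]
  refine forall₂_congr fun x z => ?_
  rw [inner_neg_left]
  constructor <;> intro h <;> linarith

end

theorem add_le_of_forall_mem_Ioo {a b e : ℝ} (h : ∀ t ∈ Ioo (0 : ℝ) 1, b + (1 - t) * e ≤ a) :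
    b + e ≤ a := by
  have hlim : Tendsto (fun t : ℝ => b + (1 - t) * e) (𝓝[>] 0) (𝓝 (b + e)) := by
    have hcont : Continuous fun t : ℝ => b + (1 - t) * e := by fun_prop
    simpa using hcont.continuousWithinAt.tendsto (x := 0) (s := Ioi 0)
  exact le_of_tendsto hlim (eventually_of_mem (Ioo_mem_nhdsGT one_pos) h)

section InterpolationObjective

variable {H : Type*} [NormedAddCommGroup H] [InnerProductSpace ℝ H]

noncomputable def interpolationObjective {J : Type*} [Fintype J] (L : ℝ) (y : J → H) (F : J → ℝ)
    (u : J → H) (x : H) (α : J → ℝ) : ℝ :=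
  ∑ j, α j * (F j + ⟪u j, x - y j⟫ + ‖u j‖ ^ 2 / (2 * L)) - ‖∑ j, α j • u j‖ ^ 2 / (2 * L)

variable {J : Type*} [Fintype J] {L : ℝ} {y : J → H} {F : J → ℝ} {u : J → H}

theorem continuous_interpolationObjective (x : H) :
    Continuous (interpolationObjective L y F u x) := by
  unfold interpolationObjective
  fun_prop

theorem interpolationObjective_eq_add_inner (x z : H) (α : J → ℝ) :
    interpolationObjective L y F u z α =
      interpolationObjective L y F u x α + ⟪∑ j, α j • u j, z - x⟫ := by
  simp only [interpolationObjective, sum_inner, real_inner_smul_left]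
  have (j : J) : ⟪u j, z - y j⟫ = ⟪u j, x - y j⟫ + ⟪u j, z - x⟫ := by
    rw [← inner_add_right, sub_add_sub_cancel']
  simp only [this, mul_add, Finset.sum_add_distrib]
  ring

theorem interpolationObjective_convex_comb (x : H) (α β : J → ℝ) (t : ℝ) :
    interpolationObjective L y F u x ((1 - t) • α + t • β) =
      (1 - t) * interpolationObjective L y F u x α + t * interpolationObjective L y F u x β +
        t * (1 - t) * (‖∑ j, β j • u j - ∑ j, α j • u j‖ ^ 2 / (2 * L)) := by
  set c : J → ℝ := fun j => F j + ⟪u j, x - y j⟫ + ‖u j‖ ^ 2 / (2 * L)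
  have hlin : ∑ j, ((1 - t) • α + t • β) j * c j =
      (1 - t) * ∑ j, α j * c j + t * ∑ j, β j * c j := by
    simp only [Pi.add_apply, Pi.smul_apply, smul_eq_mul, add_mul, Finset.sum_add_distrib,
      mul_assoc, ← Finset.mul_sum]
  have hsum : ∑ j, ((1 - t) • α + t • β) j • u j =
      (1 - t) • ∑ j, α j • u j + t • ∑ j, β j • u j := by
    simp only [Pi.add_apply, Pi.smul_apply, smul_eq_mul, add_smul, mul_smul,
      Finset.sum_add_distrib, Finset.smul_sum]
  simp only [interpolationObjective]
  rw [hlin, hsum, norm_add_sq_real, norm_sub_sq_real, norm_smul, norm_smul, real_inner_smul_left,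
    real_inner_smul_right, real_inner_comm (∑ j, β j • u j)]
  simp only [Real.norm_eq_abs, mul_pow, sq_abs]
  ring

theorem IsMaxOn.interpolationObjective_add_le {x : H} {α β : J → ℝ}
    (hα : IsMaxOn (interpolationObjective L y F u x) (stdSimplex ℝ J) α)
    (hα' : α ∈ stdSimplex ℝ J) (hβ : β ∈ stdSimplex ℝ J) :
    interpolationObjective L y F u x β + ‖∑ j, β j • u j - ∑ j, α j • u j‖ ^ 2 / (2 * L) ≤
      interpolationObjective L y F u x α := by
  refine add_le_of_forall_mem_Ioo fun t ht => ?_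
  have hmax : interpolationObjective L y F u x ((1 - t) • α + t • β) ≤
      interpolationObjective L y F u x α :=
    hα (convex_stdSimplex ℝ J hα' hβ (sub_nonneg.2 ht.2.le) ht.1.le (by ring))
  rw [interpolationObjective_convex_comb] at hmax
  nlinarith [ht.1]

theorem interpolationObjective_single [DecidableEq J] (i : J) :
    interpolationObjective L y F u (y i) (Pi.single i 1) = F i := by
  simp [interpolationObjective, Pi.single_apply]

theorem interpolationObjective_le_sub_norm_sq
    (h : ∀ i j, F j + ⟪u j, y i - y j⟫ + 1 / (2 * L) * ‖u i - u j‖ ^ 2 ≤ F i) (i : J)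
    {α : J → ℝ} (hα : α ∈ stdSimplex ℝ J) :
    interpolationObjective L y F u (y i) α ≤ F i - ‖u i - ∑ j, α j • u j‖ ^ 2 / (2 * L) := by
  have hterm (j : J) : F j + ⟪u j, y i - y j⟫ + ‖u j‖ ^ 2 / (2 * L) ≤
      F i - ‖u i‖ ^ 2 / (2 * L) + ⟪u i, u j⟫ / L := by
    have := h i j
    have e : 1 / (2 * L) * ‖u i - u j‖ ^ 2 =
        ‖u i‖ ^ 2 / (2 * L) - ⟪u i, u j⟫ / L + ‖u j‖ ^ 2 / (2 * L) := by
      rw [norm_sub_sq_real]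
      ring
    linarith
  have hsum : ∑ j, α j * (F i - ‖u i‖ ^ 2 / (2 * L) + ⟪u i, u j⟫ / L) =
      F i - ‖u i‖ ^ 2 / (2 * L) + ⟪u i, ∑ j, α j • u j⟫ / L := by
    simp only [mul_add, Finset.sum_add_distrib, ← Finset.sum_mul, hα.2, one_mul, inner_sum,
      real_inner_smul_right, mul_div_assoc', Finset.sum_div]
  calc interpolationObjective L y F u (y i) α
      ≤ F i - ‖u i‖ ^ 2 / (2 * L) + ⟪u i, ∑ j, α j • u j⟫ / L -
          ‖∑ j, α j • u j‖ ^ 2 / (2 * L) := by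
        rw [← hsum, interpolationObjective]
        exact sub_le_sub_right
          (Finset.sum_le_sum fun j _ => mul_le_mul_of_nonneg_left (hterm j) (hα.1 j)) _
    _ = F i - ‖u i - ∑ j, α j • u j‖ ^ 2 / (2 * L) := by
        rw [norm_sub_sq_real]
        ring

theorem IsMaxOn.interpolationObjective_eq_and_sum_eq (hL : 0 < L)
    (h : ∀ i j, F j + ⟪u j, y i - y j⟫ + 1 / (2 * L) * ‖u i - u j‖ ^ 2 ≤ F i) {i : J}
    {α : J → ℝ} (hα : IsMaxOn (interpolationObjective L y F u (y i)) (stdSimplex ℝ J) α)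
    (hα' : α ∈ stdSimplex ℝ J) :
    interpolationObjective L y F u (y i) α = F i ∧ ∑ j, α j • u j = u i := by
  classical
  have hge : interpolationObjective L y F u (y i) (Pi.single i 1) ≤
      interpolationObjective L y F u (y i) α := hα (single_mem_stdSimplex ℝ i)
  rw [interpolationObjective_single] at hge
  have hle := interpolationObjective_le_sub_norm_sq h i hα'
  have h0 : ‖u i - ∑ j, α j • u j‖ ^ 2 / (2 * L) = 0 := le_antisymm (by linarith) (by positivity)
  have hu : u i = ∑ j, α j • u j := by simpa [hL.ne', sub_eq_zero] using h0
  exact ⟨by linarith, hu.symm⟩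

end InterpolationObjective

section Interpolation

variable {H : Type*} [NormedAddCommGroup H] [InnerProductSpace ℝ H]
variable {J : Type*} [Finite J] {y : J → H} {F : J → ℝ} {u : J → H}

theorem exists_convex_smooth_interpolant {L : ℝ} (hL : 0 < L)
    (h : ∀ i j, F j + ⟪u j, y i - y j⟫ + 1 / (2 * L) * ‖u i - u j‖ ^ 2 ≤ F i) :
    ∃ f : H → ℝ, ∃ g : H → H, (∀ x z, f x + ⟪g x, z - x⟫ ≤ f z) ∧
      (∀ x z, f z ≤ f x + ⟪g x, z - x⟫ + L / 2 * ‖z - x‖ ^ 2) ∧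
      (∀ i, f (y i) = F i) ∧ ∀ i, g (y i) = u i := by
  classical
  cases nonempty_fintype J
  rcases isEmpty_or_nonempty J with _ | _
  · refine ⟨0, 0, by simp, fun x z => ?_, isEmptyElim, isEmptyElim⟩
    simp only [Pi.zero_apply, inner_zero_left, add_zero, zero_add]
    positivity
  have hmax (x : H) : ∃ α ∈ stdSimplex ℝ J,
      IsMaxOn (interpolationObjective L y F u x) (stdSimplex ℝ J) α :=
    (isCompact_stdSimplex ℝ J).exists_isMaxOn
      ⟨_, single_mem_stdSimplex ℝ (Classical.arbitrary J)⟩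
      (continuous_interpolationObjective x).continuousOn
  choose A hA hAmax using hmax
  have hnode (i : J) := (hAmax (y i)).interpolationObjective_eq_and_sum_eq hL h (hA _)
  refine ⟨fun x => interpolationObjective L y F u x (A x), fun x => ∑ j, A x j • u j,
    fun x z => ?_, fun x z => ?_, fun i => (hnode i).1, fun i => (hnode i).2⟩
  · rw [← interpolationObjective_eq_add_inner]
    exact hAmax z (hA x)
  · have hopt := (hAmax x).interpolationObjective_add_le (hA x) (hA z)
    have hamgm := real_inner_le_div_add_mul_norm_sq hL
      (∑ j, A z j • u j - ∑ j, A x j • u j) (z - x)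
    rw [inner_sub_left] at hamgm
    dsimp only
    rw [interpolationObjective_eq_add_inner x z]
    linarith

theorem exists_convex_smooth_interpolant_iff {L : ℝ} (hL : 0 < L) :
    (∃ f : H → ℝ, ∃ g : H → H, (∀ x z, f x + ⟪g x, z - x⟫ ≤ f z) ∧
      (∀ x z, f z ≤ f x + ⟪g x, z - x⟫ + L / 2 * ‖z - x‖ ^ 2) ∧
      (∀ i, f (y i) = F i) ∧ ∀ i, g (y i) = u i) ↔
    ∀ i j, F j + ⟪u j, y i - y j⟫ + 1 / (2 * L) * ‖u i - u j‖ ^ 2 ≤ F i := by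
  refine ⟨fun ⟨f, g, hlo, hup, hf, hg⟩ i j => ?_, exists_convex_smooth_interpolant hL⟩
  simpa [hf, hg] using add_inner_add_norm_sq_le_of_bounds hL (hlo (y j)) (hup (y i))

theorem exists_interpolant_with_quadratic_bounds_iff {μ L : ℝ} (hμL : μ < L) :
    (∃ f : H → ℝ, ∃ g : H → H,
      (∀ x z, f x + ⟪g x, z - x⟫ + μ / 2 * ‖z - x‖ ^ 2 ≤ f z) ∧
      (∀ x z, f z ≤ f x + ⟪g x, z - x⟫ + L / 2 * ‖z - x‖ ^ 2) ∧
      (∀ i, f (y i) = F i) ∧ ∀ i, g (y i) = u i) ↔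
    ∀ i j, F i ≥ F j + ⟪u j, y i - y j⟫ + μ / 2 * ‖y i - y j‖ ^ 2 +
      1 / (2 * (L - μ)) * ‖u i - u j - μ • (y i - y j)‖ ^ 2 := by
  refine Iff.trans ?_ ((exists_convex_smooth_interpolant_iff (y := y)
    (F := fun i => F i - μ / 2 * ‖y i‖ ^ 2) (u := fun i => u i - μ • y i) (sub_pos.2 hμL)).trans
    (forall₂_congr fun i j => ?_))
  · constructor
    · rintro ⟨f, g, hlo, hup, hf, hg⟩
      exact ⟨fun x => f x - μ / 2 * ‖x‖ ^ 2, fun x => g x - μ • x,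
        fun x z => by linarith [hlo x z, inner_sub_smul_sub μ (g x) x z],
        fun x z => by linarith [hup x z, inner_sub_smul_sub μ (g x) x z],
        fun i => by simp only [hf], fun i => by simp only [hg]⟩
    · rintro ⟨f, g, hlo, hup, hf, hg⟩
      -- `f + μ/2 ‖·‖²` and `g + μ • id`, written as shifts by `-μ` to match `inner_sub_smul_sub`
      exact ⟨fun x => f x - -μ / 2 * ‖x‖ ^ 2, fun x => g x - -μ • x,
        fun x z => by linarith [hlo x z, inner_sub_smul_sub (-μ) (g x) x z],
        fun x z => by linarith [hup x z, inner_sub_smul_sub (-μ) (g x) x z],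
        fun i => by simp only [hf]; ring, fun i => by simp only [hg]; module⟩
  · rw [inner_sub_smul_sub, show u i - μ • y i - (u j - μ • y j) = u i - u j - μ • (y i - y j) by
      module]
    constructor <;> intro h <;> linarith

end Interpolation

theorem smooth_strongly_convex_interpolation_general
    {H : Type*} [NormedAddCommGroup H] [InnerProductSpace ℝ H] [CompleteSpace H]
    (μ L : ℝ) (hμL : μ < L)
    {J : Type*} [Finite J] (y : J → H) (F : J → ℝ) (u : J → H) :
    (∃ f : H → ℝ, ∃ g : H → H,
        (∀ x, HasGradientAt f (g x) x) ∧
        ConvexOn ℝ Set.univ (fun x => f x - μ / 2 * ‖x‖ ^ 2) ∧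
        ConvexOn ℝ Set.univ (fun x => L / 2 * ‖x‖ ^ 2 - f x) ∧
        (∀ i, f (y i) = F i) ∧ (∀ i, g (y i) = u i)) ↔
    (∀ i j, F i ≥ F j + ⟪u j, y i - y j⟫ + μ / 2 * ‖y i - y j‖ ^ 2 +
        1 / (2 * (L - μ)) * ‖u i - u j - μ • (y i - y j)‖ ^ 2) := by
  rw [← exists_interpolant_with_quadratic_bounds_iff hμL]
  constructor
  · rintro ⟨f, g, hg, hlo, hup, hf, hu⟩
    exact ⟨f, g, (convexOn_sub_half_mul_norm_sq_iff hg μ).1 hlo,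
      (convexOn_half_mul_norm_sq_sub_iff hg L).1 hup, hf, hu⟩
  · rintro ⟨f, g, hlo, hup, hf, hu⟩
    have hg (x : H) : HasGradientAt f (g x) x := hasGradientAt_of_quadratic_bounds (hlo x) (hup x)
    exact ⟨f, g, hg, (convexOn_sub_half_mul_norm_sq_iff hg μ).2 hlo,
      (convexOn_half_mul_norm_sq_sub_iff hg L).2 hup, hf, hu⟩

/-- Tight interpolation theorem for the class `F_{μ,L}(H)` of Fréchet differentiable
functions that are `μ`-strongly (or weakly, for `μ < 0`) convex and `L`-smooth
in the sense that `(L/2)‖·‖² - f` is convex, with `-∞ < μ < L < ∞`. -/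
theorem smooth_strongly_convex_interpolation
    {H : Type*} [NormedAddCommGroup H] [InnerProductSpace ℝ H] [CompleteSpace H]
    (μ L : ℝ) (hμL : μ < L) (hL : 0 < L)
    {J : Type*} [Finite J] (y : J → H) (F : J → ℝ) (u : J → H) :
    (∃ f : H → ℝ, ∃ g : H → H,
        (∀ x, HasGradientAt f (g x) x) ∧
        ConvexOn ℝ Set.univ (fun x => f x - μ / 2 * ‖x‖ ^ 2) ∧
        ConvexOn ℝ Set.univ (fun x => L / 2 * ‖x‖ ^ 2 - f x) ∧
        (∀ i, f (y i) = F i) ∧ (∀ i, g (y i) = u i)) ↔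
    (∀ i j, F i ≥ F j + ⟪u j, y i - y j⟫ + μ / 2 * ‖y i - y j‖ ^ 2 +
        1 / (2 * (L - μ)) * ‖u i - u j - μ • (y i - y j)‖ ^ 2) :=
  smooth_strongly_convex_interpolation_general μ L hμL y F u
end

section
/- Let H be a real Hilbert space, let μ ∈ ℝ, and let {(y_i, F_i, u_i)}_{i ∈ J} be a finite family of triplets in H × ℝ × H. Then the following are equivalent: (i) there exists a function f : H → ℝ such that x ↦ f(x) − (μ/2)‖x‖² is convex, f(y_i) = F_i for every i ∈ J, and for every i ∈ J and every x ∈ H, f(x) ≥ f(y_i) + ⟨u_i, x − y_i⟩ + (μ/2)‖x − y_i‖² (i.e., u_i is a subgradient of f at y_i with modulus μ); (ii) for all i, j ∈ J, F_i ≥ F_j + ⟨u_j, y_i − y_j⟩ + (μ/2)‖y_i − y_j‖². -/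
open scoped RealInnerProductSpace

/-- Interpolation theorem for the class `F_{μ,∞}(H)` of `μ`-strongly (weakly for
`μ < 0`) convex functions, where `u i` is a subgradient of modulus `μ` at `y i`. -/
theorem strongly_convex_interpolation
    {H : Type*} [NormedAddCommGroup H] [InnerProductSpace ℝ H] [CompleteSpace H]
    (μ : ℝ) {J : Type*} [Finite J] (y : J → H) (F : J → ℝ) (u : J → H) :
    (∃ f : H → ℝ,
        ConvexOn ℝ Set.univ (fun x => f x - μ / 2 * ‖x‖ ^ 2) ∧
        (∀ i, f (y i) = F i) ∧
        (∀ i, ∀ x : H,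
          f x ≥ f (y i) + ⟪u i, x - y i⟫ + μ / 2 * ‖x - y i‖ ^ 2)) ↔
    (∀ i j, F i ≥ F j + ⟪u j, y i - y j⟫ + μ / 2 * ‖y i - y j‖ ^ 2) := by
  constructor
  · rintro ⟨f, _, hval, hsub⟩ i j
    have := hsub j (y i)
    rw [hval i, hval j] at this
    exact this
  · intro h
    cases isEmpty_or_nonempty J with
    | inl hJ =>
      refine ⟨fun x => μ / 2 * ‖x‖ ^ 2, ?_, fun i => isEmptyElim i, fun i => isEmptyElim i⟩
      have : (fun x : H => μ / 2 * ‖x‖ ^ 2 - μ / 2 * ‖x‖ ^ 2) = fun _ => (0 : ℝ) := by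
        funext x; ring
      rw [this]
      exact convexOn_const 0 convex_univ
    | inr hJ =>
      have : Fintype J := Fintype.ofFinite J
      set G : J → ℝ := fun j => F j - μ / 2 * ‖y j‖ ^ 2 with hG
      set v : J → H := fun j => u j - μ • y j with hv
      set g : H → ℝ := fun x => Finset.univ.sup' Finset.univ_nonempty
        (fun j => G j + ⟪v j, x - y j⟫) with hg
      -- key inequality in the `g` world
      have hkey : ∀ i j, G j + ⟪v j, y i - y j⟫ ≤ G i := by
        intro i j
        have h1 := h i j
        have e1 : ⟪v j, y i - y j⟫ = ⟪u j, y i - y j⟫ - μ * ⟪y j, y i - y j⟫ := by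
          simp [hv, inner_sub_left, inner_smul_left]
        have e2 : ‖y i - y j‖ ^ 2 = ‖y i‖ ^ 2 - 2 * ⟪y i, y j⟫ + ‖y j‖ ^ 2 :=
          norm_sub_sq_real (y i) (y j)
        have e3 : ⟪y j, y i - y j⟫ = ⟪y i, y j⟫ - ‖y j‖ ^ 2 := by
          rw [inner_sub_right, real_inner_comm, real_inner_self_eq_norm_sq]
        simp only [hG]
        rw [e2] at h1
        rw [e1, e3]
        linarith
      have hglb : ∀ i x, G i + ⟪v i, x - y i⟫ ≤ g x := fun i x =>
        Finset.le_sup' (fun j => G j + ⟪v j, x - y j⟫) (Finset.mem_univ i)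
      have hgy : ∀ i, g (y i) = G i := by
        intro i
        apply le_antisymm
        · exact Finset.sup'_le _ _ fun j _ => hkey i j
        · have h0 := hglb i (y i)
          simp only [sub_self, inner_zero_right, add_zero] at h0
          exact h0
      have hgconv : ConvexOn ℝ Set.univ g := by
        refine ⟨convex_univ, fun x _ z _ a b ha hb hab => ?_⟩
        refine Finset.sup'_le _ _ fun j _ => ?_
        have e : a • x + b • z - y j = a • (x - y j) + b • (z - y j) := by
          rw [smul_sub, smul_sub]
          rw [show a • x - a • y j + (b • z - b • y j)
            = a • x + b • z - (a • y j + b • y j) by abel]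
          rw [← add_smul, hab, one_smul]
        rw [e, inner_add_right, real_inner_smul_right, real_inner_smul_right]
        have h1 : G j + ⟪v j, x - y j⟫ ≤ g x := hglb j x
        have h2 : G j + ⟪v j, z - y j⟫ ≤ g z := hglb j z
        simp only [smul_eq_mul]
        have h3 : a * G j + b * G j = G j := by rw [← add_mul, hab, one_mul]
        linarith [mul_le_mul_of_nonneg_left h1 ha, mul_le_mul_of_nonneg_left h2 hb]
      refine ⟨fun x => g x + μ / 2 * ‖x‖ ^ 2, ?_, ?_, ?_⟩
      · have : (fun x : H => g x + μ / 2 * ‖x‖ ^ 2 - μ / 2 * ‖x‖ ^ 2) = g := by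
          funext x; ring
        rw [this]; exact hgconv
      · intro i
        show g (y i) + μ / 2 * ‖y i‖ ^ 2 = F i
        rw [hgy i]
        simp [hG]
      · intro i x
        have h1 := hglb i x
        have e1 : ⟪v i, x - y i⟫ = ⟪u i, x - y i⟫ - μ * ⟪y i, x - y i⟫ := by
          simp [hv, inner_sub_left, inner_smul_left]
        have e2 : ‖x - y i‖ ^ 2 = ‖x‖ ^ 2 - 2 * ⟪x, y i⟫ + ‖y i‖ ^ 2 :=
          norm_sub_sq_real x (y i)
        have e3 : ⟪y i, x - y i⟫ = ⟪x, y i⟫ - ‖y i‖ ^ 2 := by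
          rw [inner_sub_right, real_inner_comm, real_inner_self_eq_norm_sq]
        show g x + μ / 2 * ‖x‖ ^ 2 ≥ g (y i) + μ / 2 * ‖y i‖ ^ 2 + ⟪u i, x - y i⟫ + μ / 2 * ‖x - y i‖ ^ 2
        rw [hgy i]
        simp only [hG, ge_iff_le]
        rw [e1, e3] at h1
        simp only [hG] at h1
        rw [e2]
        linarith
end

section
/- Let H be a real Hilbert space, let μ > 0, and let {(y_i, u_i)}_{i ∈ J} be a family of pairs in H × H. Then the following are equivalent: (i) there exists a subset A ⊆ H × H that is maximally monotone and μ-strongly monotone, with (y_i, u_i) ∈ A for every i ∈ J; (ii) for all i, j ∈ J, ⟨u_i − u_j, y_i − y_j⟩ ≥ μ‖y_i − y_j‖². -/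
/-!
Necessity is immediate. For sufficiency, Zorn's lemma extends the data to a maximal `μ`-strongly
monotone set `M`. The map `(x, u) ↦ (x + u, 2(1 + μ)x - (x + u))` turns `μ`-strong monotonicity into
nonexpansiveness, so the Kirszbraun–Valentine one-point extension theorem yields, for every `z`, a
pair `(x, z - x)` compatible with `M`; by maximality it lies in `M`. Hence `Id + M` is onto, which
forces maximal monotonicity (the easy half of Minty's theorem).
-/

open scoped RealInnerProductSpace

variable {H : Type*} [NormedAddCommGroup H] [InnerProductSpace ℝ H]

/-- A subset of `H × H` (the graph of a set-valued operator) is monotone. -/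
def IsMonotoneGraph (A : Set (H × H)) : Prop :=
  ∀ p ∈ A, ∀ q ∈ A, 0 ≤ ⟪p.2 - q.2, p.1 - q.1⟫

/-- A subset of `H × H` is `μ`-strongly monotone. -/
def IsStronglyMonotoneGraph (μ : ℝ) (A : Set (H × H)) : Prop :=
  ∀ p ∈ A, ∀ q ∈ A, μ * ‖p.1 - q.1‖ ^ 2 ≤ ⟪p.2 - q.2, p.1 - q.1⟫

/-- A subset of `H × H` is maximally monotone: it is monotone and not a proper
subset of any monotone subset of `H × H`. -/
def IsMaximallyMonotoneGraph (A : Set (H × H)) : Prop :=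
  IsMonotoneGraph A ∧ ∀ B : Set (H × H), IsMonotoneGraph B → A ⊆ B → B = A

theorem Convex.exists_mem_forall_norm_sub_sq_add_le {K : Set H} (hconv : Convex ℝ K)
    (hne : K.Nonempty) (hcomplete : IsComplete K) :
    ∃ v ∈ K, ∀ w ∈ K, ‖w - v‖ ^ 2 + ‖v‖ ^ 2 ≤ ‖w‖ ^ 2 := by
  obtain ⟨v, hvK, hv⟩ := exists_norm_eq_iInf_of_complete_convex hne hcomplete hconv 0
  refine ⟨v, hvK, fun w hw => ?_⟩
  have h := (norm_eq_iInf_iff_real_inner_le_zero hconv hvK).1 hv w hw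
  rw [zero_sub, inner_neg_left, real_inner_comm] at h
  have hexpand := norm_add_sq_real (w - v) v
  rw [sub_add_cancel] at hexpand
  linarith

theorem exists_mem_forall_norm_add_smul_sub_lt {D : Set H} (hne : D.Nonempty)
    (hcomplete : IsComplete D) (hconv : Convex ℝ D) {x : H} (hx : x ∉ D) :
    ∃ y ∈ D, ∀ t ∈ Set.Ioc (0 : ℝ) 1, ∀ v ∈ D, ‖x + t • (y - x) - v‖ < ‖x - v‖ := by
  obtain ⟨y, hyD, hy⟩ := exists_norm_eq_iInf_of_complete_convex hne hcomplete hconv x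
  have hproj := (norm_eq_iInf_iff_real_inner_le_zero hconv hyD).1 hy
  have hxy : 0 < ‖y - x‖ := norm_pos_iff.2 (sub_ne_zero.2 fun h => hx (h ▸ hyD))
  refine ⟨y, hyD, fun t ⟨ht₀, ht₁⟩ v hv => ?_⟩
  have hobtuse : ⟪x - v, y - x⟫ ≤ -‖y - x‖ ^ 2 := by
    have hexpand : ⟪x - v, y - x⟫ = -‖y - x‖ ^ 2 + ⟪x - y, v - y⟫ := by
      rw [← real_inner_self_eq_norm_sq]
      simp only [inner_sub_left, inner_sub_right, real_inner_comm]
      ring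
    linarith [hproj v hv]
  have hsq : ‖x + t • (y - x) - v‖ ^ 2 ≤ ‖x - v‖ ^ 2 - t * (2 - t) * ‖y - x‖ ^ 2 := by
    rw [show x + t • (y - x) - v = (x - v) + t • (y - x) by abel, norm_add_sq_real,
      real_inner_smul_right, norm_smul, Real.norm_of_nonneg ht₀.le]
    nlinarith
  refine (pow_lt_pow_iff_left₀ (norm_nonneg _) (norm_nonneg _) two_ne_zero).1 ?_
  have : 0 < t * (2 - t) * ‖y - x‖ ^ 2 := mul_pos (mul_pos ht₀ (by linarith)) (pow_pos hxy 2)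
  linarith

-- The minimal-norm points of the finite intersections form a Cauchy net; this replaces weak
-- compactness.
open Filter Topology in
theorem nonempty_iInter_of_isClosed_of_convex [CompleteSpace H] {ι : Type*} {s : ι → Set H}
    (hclosed : ∀ i, IsClosed (s i)) (hconv : ∀ i, Convex ℝ (s i))
    (hbdd : ∃ i, Bornology.IsBounded (s i)) (hfin : ∀ F : Finset ι, (⋂ i ∈ F, s i).Nonempty) :
    (⋂ i, s i).Nonempty := by
  classical
  obtain ⟨i₀, R, hR⟩ := hbdd.imp fun i => (Metric.isBounded_iff_subset_closedBall 0).1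
  have hmin : ∀ F : Finset ι, ∃ v ∈ ⋂ i ∈ F, s i,
      ∀ w ∈ ⋂ i ∈ F, s i, ‖w - v‖ ^ 2 + ‖v‖ ^ 2 ≤ ‖w‖ ^ 2 := fun F =>
    (convex_iInter₂ fun i _ => hconv i).exists_mem_forall_norm_sub_sq_add_le (hfin F)
      (isClosed_biInter fun i _ => hclosed i).isComplete
  choose v hvK hv using hmin
  have hstep : ∀ F G : Finset ι, F ≤ G → ‖v G - v F‖ ^ 2 + ‖v F‖ ^ 2 ≤ ‖v G‖ ^ 2 :=
    fun F G hFG => hv F (v G) (Set.biInter_subset_biInter_left hFG (hvK G))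
  have hmono : Monotone fun F => ‖v F‖ ^ 2 := fun F G hFG => by
    nlinarith [hstep F G hFG, sq_nonneg ‖v G - v F‖]
  have hbddN : BddAbove (Set.range fun F => ‖v F‖ ^ 2) := by
    refine ⟨R ^ 2, Set.forall_mem_range.2 fun F => (hmono (Finset.subset_insert i₀ F)).trans ?_⟩
    have h := hR (Set.mem_iInter₂.1 (hvK (insert i₀ F)) i₀ (Finset.mem_insert_self i₀ F))
    rw [mem_closedBall_zero_iff] at h
    exact pow_le_pow_left₀ (norm_nonneg _) h 2
  have hcauchy : CauchySeq v := by
    have hN := Metric.cauchySeq_iff'.1 (tendsto_atTop_ciSup hmono hbddN).cauchySeq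
    refine Metric.cauchySeq_iff'.2 fun ε hε => ?_
    obtain ⟨F, hF⟩ := hN (ε ^ 2) (by positivity)
    refine ⟨F, fun G hG => ?_⟩
    have h := hF G hG
    rw [Real.dist_eq, abs_of_nonneg (sub_nonneg.2 (hmono hG))] at h
    rw [dist_eq_norm]
    nlinarith [hstep F G hG, norm_nonneg (v G - v F)]
  obtain ⟨x, hx⟩ := cauchySeq_tendsto_of_complete hcauchy
  refine ⟨x, Set.mem_iInter.2 fun i => (hclosed i).mem_of_tendsto hx ?_⟩
  exact eventually_atTop.2
    ⟨{i}, fun G hG => Set.mem_iInter₂.1 (hvK G) i (hG (Finset.mem_singleton_self i))⟩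

open Finset in
theorem sum_sum_mul_norm_sub_sq {ι : Type*} (s : Finset ι) {w : ι → ℝ} (hw : ∑ i ∈ s, w i = 1)
    (a : ι → H) (z : H) :
    ∑ i ∈ s, ∑ j ∈ s, w i * w j * ‖a i - a j‖ ^ 2 =
      2 * ∑ i ∈ s, w i * ‖z - a i‖ ^ 2 - 2 * ‖z - ∑ i ∈ s, w i • a i‖ ^ 2 := by
  have hcenter : z - ∑ i ∈ s, w i • a i = ∑ i ∈ s, w i • (z - a i) := by
    simp only [smul_sub, sum_sub_distrib, ← sum_smul, hw, one_smul]
  have hsq : ‖∑ i ∈ s, w i • (z - a i)‖ ^ 2 =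
      ∑ i ∈ s, ∑ j ∈ s, w i * w j * ⟪z - a i, z - a j⟫ := by
    simp only [← real_inner_self_eq_norm_sq, sum_inner, inner_sum, real_inner_smul_left,
      real_inner_smul_right]
    refine sum_congr rfl fun i _ => sum_congr rfl fun j _ => ?_
    rw [real_inner_comm]
    ring
  have hpair : ∀ i j, ‖a i - a j‖ ^ 2 = ‖z - a i‖ ^ 2 - 2 * ⟪z - a i, z - a j⟫ + ‖z - a j‖ ^ 2 := by
    intro i j
    rw [← norm_sub_sq_real, sub_sub_sub_cancel_left, norm_sub_rev]
  rw [hcenter, hsq]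
  simp only [hpair, mul_add, mul_sub, sum_add_distrib, sum_sub_distrib]
  simp only [mul_assoc, ← mul_sum, ← sum_mul, hw, one_mul, mul_left_comm (w _) (2 : ℝ)]
  ring

-- Otherwise a step from `x` towards its projection onto the hull of the active points lowers
-- every active term, while the inactive ones stay below the maximum for short steps.
open Filter Topology in
theorem mem_convexHull_of_isMinOn_sup' {ι : Type*} {s : Finset ι} (hs : s.Nonempty) (b : ι → H)
    (c : ι → ℝ) {x : H} (hx : x ∈ convexHull ℝ (b '' s))
    (hmin : IsMinOn (fun x => s.sup' hs fun i => ‖x - b i‖ ^ 2 - c i) (convexHull ℝ (b '' s)) x) :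
    x ∈ convexHull ℝ
      (b '' (s.filter fun i => ‖x - b i‖ ^ 2 - c i = s.sup' hs fun i => ‖x - b i‖ ^ 2 - c i)) := by
  set φ : ι → H → ℝ := fun i x => ‖x - b i‖ ^ 2 - c i
  set f : H → ℝ := fun x => s.sup' hs fun i => φ i x
  set T := s.filter fun i => φ i x = f x
  by_contra hxD
  have hTs : T ⊆ s := Finset.filter_subset _ _
  obtain ⟨i₀, hi₀, hmax⟩ := s.exists_mem_eq_sup' hs fun i => φ i x
  have hDne : (convexHull ℝ (b '' T)).Nonempty :=
    ⟨b i₀, subset_convexHull ℝ _ ⟨i₀, Finset.mem_filter.2 ⟨hi₀, hmax.symm⟩, rfl⟩⟩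
  obtain ⟨y, hyD, hdesc⟩ := exists_mem_forall_norm_add_smul_sub_lt hDne
    ((T.finite_toSet.image b).isCompact_convexHull ℝ).isComplete (convex_convexHull ℝ _) hxD
  have hyC : y ∈ convexHull ℝ (b '' s) :=
    convexHull_mono (Set.image_mono (Finset.coe_subset.2 hTs)) hyD
  have hinactive : ∀ᶠ t in 𝓝[>] (0 : ℝ), ∀ i ∈ s, i ∉ T → φ i (x + t • (y - x)) < f x := by
    refine (eventually_all_finset s).2 fun i hi => ?_
    by_cases hiT : i ∈ T
    · exact Eventually.of_forall fun _ h => absurd hiT h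
    have hlt : φ i x < f x := (Finset.le_sup' (fun i => φ i x) hi).lt_of_ne
      fun h => hiT (Finset.mem_filter.2 ⟨hi, h⟩)
    have hcont : Tendsto (fun t : ℝ => φ i (x + t • (y - x))) (𝓝 0) (𝓝 (φ i x)) := by
      have : Continuous fun t : ℝ => φ i (x + t • (y - x)) := by fun_prop
      simpa using this.tendsto 0
    exact (hcont.eventually_lt_const hlt).filter_mono nhdsWithin_le_nhds |>.mono fun _ h _ => h
  have hsmall : ∀ᶠ t in 𝓝[>] (0 : ℝ), t ∈ Set.Ioc 0 1 := Ioc_mem_nhdsGT one_pos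
  obtain ⟨t, ht, hinact⟩ := (hsmall.and hinactive).exists
  have hlt : f (x + t • (y - x)) < f x := by
    refine (Finset.sup'_lt_iff hs).2 fun i hi => ?_
    by_cases hiT : i ∈ T
    · have hcloser := hdesc t ht (b i) (subset_convexHull ℝ _ ⟨i, hiT, rfl⟩)
      have hactive : φ i x = f x := (Finset.mem_filter.1 hiT).2
      have hcloser_sq := pow_lt_pow_left₀ hcloser (norm_nonneg _) two_ne_zero
      simp only [φ] at hactive ⊢
      linarith
    · exact hinact i hi hiT
  have hmem : x + t • (y - x) ∈ convexHull ℝ (b '' s) :=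
    (convex_convexHull ℝ _).add_smul_sub_mem hx hyC (Set.Ioc_subset_Icc_self ht)
  exact (hmin hmem).not_gt hlt

def IsNonexpansiveGraph {E : Type*} [SeminormedAddCommGroup E] (P : Set (E × E)) : Prop :=
  ∀ p ∈ P, ∀ q ∈ P, ‖p.2 - q.2‖ ≤ ‖p.1 - q.1‖

theorem IsNonexpansiveGraph.mono {E : Type*} [SeminormedAddCommGroup E] {P Q : Set (E × E)}
    (hP : IsNonexpansiveGraph P) (hQP : Q ⊆ P) :
    IsNonexpansiveGraph Q :=
  fun p hp q hq => hP p (hQP hp) q (hQP hq)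

-- Comparing `sum_sum_mul_norm_sub_sq` for the `p.2` at their barycentre `x` with the same identity
-- for the `p.1` at `z` shows that the mean of `‖x - p.2‖² - ‖z - p.1‖²` is nonpositive.
open Finset in
theorem IsNonexpansiveGraph.exists_norm_sub_le_of_mem_convexHull {T : Finset (H × H)}
    (hT : IsNonexpansiveGraph (T : Set (H × H))) {x : H}
    (hx : x ∈ convexHull ℝ (Prod.snd '' (T : Set (H × H)))) (z : H) :
    ∃ p ∈ T, ‖x - p.2‖ ≤ ‖z - p.1‖ := by
  rw [← LinearMap.coe_snd (R := ℝ), ← LinearMap.image_convexHull] at hx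
  obtain ⟨q, hq, rfl⟩ := hx
  obtain ⟨w, hw₀, hw₁, rfl⟩ := Finset.mem_convexHull'.1 hq
  simp only [LinearMap.snd_apply, Prod.snd_sum, Prod.smul_snd]
  set x := ∑ p ∈ T, w p • p.2 with hx
  have hsq : ∀ p ∈ T, ∀ p' ∈ T, w p * w p' * ‖p.2 - p'.2‖ ^ 2 ≤ w p * w p' * ‖p.1 - p'.1‖ ^ 2 :=
    fun p hp p' hp' => mul_le_mul_of_nonneg_left
      (pow_le_pow_left₀ (norm_nonneg _) (hT p hp p' hp') 2) (mul_nonneg (hw₀ p hp) (hw₀ p' hp'))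
  have hmean : ∑ p ∈ T, w p * ‖x - p.2‖ ^ 2 ≤ ∑ p ∈ T, w p * ‖z - p.1‖ ^ 2 := by
    have hsnd := sum_sum_mul_norm_sub_sq T hw₁ Prod.snd x
    have hfst := sum_sum_mul_norm_sub_sq T hw₁ Prod.fst z
    rw [← hx, sub_self, norm_zero] at hsnd
    have hsum := sum_le_sum fun p hp => sum_le_sum (hsq p hp)
    nlinarith [sq_nonneg ‖z - ∑ i ∈ T, w i • i.1‖]
  have hT₀ : T.Nonempty := nonempty_of_sum_ne_zero (hw₁.symm ▸ one_ne_zero)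
  obtain ⟨p, hp, hmin⟩ := T.exists_mem_eq_inf' hT₀ fun p => ‖x - p.2‖ ^ 2 - ‖z - p.1‖ ^ 2
  refine ⟨p, hp, (pow_le_pow_iff_left₀ (norm_nonneg _) (norm_nonneg _) two_ne_zero).1 ?_⟩
  have hinf := T.inf_le_centerMass hw₀ (hw₁ ▸ one_pos) (f := fun p => ‖x - p.2‖ ^ 2 - ‖z - p.1‖ ^ 2)
  rw [hmin, centerMass_eq_of_sum_1 _ _ hw₁] at hinf
  simp only [smul_eq_mul, mul_sub, sum_sub_distrib] at hinf
  linarith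

theorem IsNonexpansiveGraph.exists_forall_norm_sub_le_of_finset {P : Finset (H × H)}
    (hP : IsNonexpansiveGraph (P : Set (H × H))) (z : H) :
    ∃ x, ∀ p ∈ P, ‖x - p.2‖ ≤ ‖z - p.1‖ := by
  rcases P.eq_empty_or_nonempty with rfl | hne
  · exact ⟨0, by simp⟩
  set f : H → ℝ := fun x => P.sup' hne fun p => ‖x - p.2‖ ^ 2 - ‖z - p.1‖ ^ 2
  have hf : Continuous f := Continuous.finset_sup'_apply hne fun p _ => by fun_prop
  obtain ⟨p₀, hp₀⟩ := id hne
  obtain ⟨x, hxC, hmin⟩ := ((P.finite_toSet.image Prod.snd).isCompact_convexHull ℝ).exists_isMinOn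
    ⟨p₀.2, subset_convexHull ℝ _ ⟨p₀, hp₀, rfl⟩⟩ hf.continuousOn
  have hactive := mem_convexHull_of_isMinOn_sup' hne Prod.snd (fun p => ‖z - p.1‖ ^ 2) hxC hmin
  obtain ⟨p, hp, hpx⟩ := (hP.mono (Finset.coe_subset.2 (Finset.filter_subset _ _))
    ).exists_norm_sub_le_of_mem_convexHull hactive z
  refine ⟨x, fun q hq => (pow_le_pow_iff_left₀ (norm_nonneg _) (norm_nonneg _) two_ne_zero).1 ?_⟩
  have hqp : ‖x - q.2‖ ^ 2 - ‖z - q.1‖ ^ 2 ≤ ‖x - p.2‖ ^ 2 - ‖z - p.1‖ ^ 2 :=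
    (Finset.le_sup' (fun p => ‖x - p.2‖ ^ 2 - ‖z - p.1‖ ^ 2) hq).trans (Finset.mem_filter.1 hp).2.ge
  nlinarith [pow_le_pow_left₀ (norm_nonneg _) hpx 2]

theorem IsNonexpansiveGraph.exists_forall_norm_sub_le [CompleteSpace H] {P : Set (H × H)}
    (hP : IsNonexpansiveGraph P) (z : H) : ∃ x, ∀ p ∈ P, ‖x - p.2‖ ≤ ‖z - p.1‖ := by
  rcases P.eq_empty_or_nonempty with rfl | ⟨p₀, hp₀⟩
  · exact ⟨0, by simp⟩
  have hfin : ∀ F : Finset P, (⋂ p ∈ F, Metric.closedBall p.1.2 ‖z - p.1.1‖).Nonempty := by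
    intro F
    have hFP : ((F.map (Function.Embedding.subtype _) : Finset (H × H)) : Set (H × H)) ⊆ P :=
      fun p hp => by
        obtain ⟨q, -, rfl⟩ := Finset.mem_map.1 hp
        exact q.2
    obtain ⟨x, hx⟩ := (hP.mono hFP).exists_forall_norm_sub_le_of_finset z
    refine ⟨x, Set.mem_iInter₂.2 fun p hp => ?_⟩
    rw [Metric.mem_closedBall, dist_eq_norm]
    exact hx p (Finset.mem_map_of_mem _ hp)
  obtain ⟨x, hx⟩ := nonempty_iInter_of_isClosed_of_convex (fun _ => Metric.isClosed_closedBall)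
    (fun _ => convex_closedBall _ _) ⟨⟨p₀, hp₀⟩, Metric.isBounded_closedBall⟩ hfin
  exact ⟨x, fun p hp => by simpa [dist_eq_norm] using Set.mem_iInter.1 hx ⟨p, hp⟩⟩

-- On graphs this is `A ↦ 2(1 + μ)(Id + A)⁻¹ - Id`.
def cayley (μ : ℝ) (p : H × H) : H × H :=
  (p.1 + p.2, (2 * (1 + μ)) • p.1 - (p.1 + p.2))

theorem norm_cayley_sub_le_iff {μ : ℝ} (hμ : -1 < μ) (p q : H × H) :
    ‖(cayley μ p).2 - (cayley μ q).2‖ ≤ ‖(cayley μ p).1 - (cayley μ q).1‖ ↔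
      μ * ‖p.1 - q.1‖ ^ 2 ≤ ⟪p.2 - q.2, p.1 - q.1⟫ := by
  have hident : ‖(cayley μ p).2 - (cayley μ q).2‖ ^ 2 = ‖(cayley μ p).1 - (cayley μ q).1‖ ^ 2 +
      4 * (1 + μ) * (μ * ‖p.1 - q.1‖ ^ 2 - ⟪p.2 - q.2, p.1 - q.1⟫) := by
    have h₁ : (cayley μ p).1 - (cayley μ q).1 = (p.1 - q.1) + (p.2 - q.2) := by
      simp only [cayley]; abel
    have h₂ : (cayley μ p).2 - (cayley μ q).2 = (1 + 2 * μ) • (p.1 - q.1) - (p.2 - q.2) := by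
      simp only [cayley]; module
    rw [h₁, h₂, norm_add_sq_real, norm_sub_sq_real, real_inner_smul_left, norm_smul,
      Real.norm_eq_abs, mul_pow, sq_abs, real_inner_comm]
    ring
  rw [← pow_le_pow_iff_left₀ (norm_nonneg _) (norm_nonneg _) two_ne_zero, hident]
  constructor <;> intro h <;> nlinarith

namespace IsStronglyMonotoneGraph

variable {μ : ℝ} {A : Set (H × H)}

theorem isMonotoneGraph (hμ : 0 ≤ μ) (hA : IsStronglyMonotoneGraph μ A) : IsMonotoneGraph A :=
  fun p hp q hq => (by positivity : 0 ≤ μ * ‖p.1 - q.1‖ ^ 2).trans (hA p hp q hq)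

theorem isNonexpansiveGraph_image_cayley (hμ : -1 < μ) (hA : IsStronglyMonotoneGraph μ A) :
    IsNonexpansiveGraph (cayley μ '' A) := by
  rintro _ ⟨p, hp, rfl⟩ _ ⟨q, hq, rfl⟩
  exact (norm_cayley_sub_le_iff hμ p q).2 (hA p hp q hq)

theorem insert {q : H × H} (hA : IsStronglyMonotoneGraph μ A)
    (hq : ∀ p ∈ A, μ * ‖q.1 - p.1‖ ^ 2 ≤ ⟪q.2 - p.2, q.1 - p.1⟫) :
    IsStronglyMonotoneGraph μ (insert q A) := by
  rintro p (rfl | hp) r (rfl | hr)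
  · simp
  · exact hq r hr
  · rw [← neg_sub r.1, ← neg_sub r.2, norm_neg, inner_neg_neg]
    exact hq p hp
  · exact hA p hp r hr

theorem exists_maximal (hA : IsStronglyMonotoneGraph μ A) :
    ∃ M, A ⊆ M ∧ Maximal (IsStronglyMonotoneGraph μ) M := by
  refine zorn_subset_nonempty {B | IsStronglyMonotoneGraph μ B} ?_ A hA
  intro c hc hchain _
  refine ⟨⋃₀ c, ?_, fun B hB => Set.subset_sUnion_of_mem hB⟩
  rintro p ⟨B, hB, hp⟩ q ⟨B', hB', hq⟩
  rcases hchain.total hB hB' with h | h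
  · exact hc hB' p (h hp) q hq
  · exact hc hB p hp q (h hq)

end IsStronglyMonotoneGraph

theorem exists_mem_add_eq_of_maximal_isStronglyMonotoneGraph [CompleteSpace H] {μ : ℝ}
    (hμ : -1 < μ) {M : Set (H × H)} (hM : Maximal (IsStronglyMonotoneGraph μ) M) (z : H) :
    ∃ p ∈ M, p.1 + p.2 = z := by
  obtain ⟨n, hn⟩ := (hM.prop.isNonexpansiveGraph_image_cayley hμ).exists_forall_norm_sub_le z
  set x : H := (2 * (1 + μ))⁻¹ • (z + n)
  have hx : cayley μ (x, z - x) = (z, n) := by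
    have h : 2 * (1 + μ) ≠ 0 := by linarith
    simp only [cayley, x, add_sub_cancel, smul_inv_smul₀ h, add_sub_cancel_left]
  have hq : ∀ p ∈ M, μ * ‖x - p.1‖ ^ 2 ≤ ⟪(z - x) - p.2, x - p.1⟫ := fun p hp =>
    (norm_cayley_sub_le_iff hμ (x, z - x) p).1 (hx ▸ hn _ ⟨p, hp, rfl⟩)
  exact ⟨(x, z - x), hM.mem_of_prop_insert (hM.prop.insert hq), add_sub_cancel x z⟩

theorem IsMonotoneGraph.isMaximallyMonotoneGraph_of_forall_exists_add_eq {A : Set (H × H)}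
    (hA : IsMonotoneGraph A) (hsurj : ∀ z, ∃ p ∈ A, p.1 + p.2 = z) :
    IsMaximallyMonotoneGraph A := by
  refine ⟨hA, fun B hB hAB => (Set.Subset.antisymm · hAB) fun p hp => ?_⟩
  obtain ⟨q, hqA, hq⟩ := hsurj (p.1 + p.2)
  have hu : p.2 - q.2 = -(p.1 - q.1) := by
    rw [neg_sub, sub_eq_sub_iff_add_eq_add, hq, add_comm]
  have h := hB p hp q (hAB hqA)
  rw [hu, inner_neg_left, real_inner_self_eq_norm_sq, neg_nonneg] at h
  have h₁ : p.1 = q.1 := sub_eq_zero.1 (norm_eq_zero.1 (pow_eq_zero_iff two_ne_zero |>.1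
    (le_antisymm h (sq_nonneg _))))
  have h₂ : p.2 = q.2 := by rwa [h₁, sub_self, neg_zero, sub_eq_zero] at hu
  exact Prod.ext h₁ h₂ ▸ hqA

/-- Interpolation theorem for `μ`-strongly and maximally monotone operators. -/
theorem strongly_monotone_interpolation
    [CompleteSpace H] (μ : ℝ) (hμ : 0 < μ) {J : Type*} (y u : J → H) :
    (∃ A : Set (H × H), IsMaximallyMonotoneGraph A ∧ IsStronglyMonotoneGraph μ A ∧
        ∀ i, (y i, u i) ∈ A) ↔
    (∀ i j, μ * ‖y i - y j‖ ^ 2 ≤ ⟪u i - u j, y i - y j⟫) := by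
  refine ⟨fun ⟨A, _, hA, hmem⟩ i j => hA _ (hmem i) _ (hmem j), fun h => ?_⟩
  have hdata : IsStronglyMonotoneGraph μ (Set.range fun i => (y i, u i)) := by
    rintro _ ⟨i, rfl⟩ _ ⟨j, rfl⟩
    exact h i j
  obtain ⟨M, hdataM, hM⟩ := hdata.exists_maximal
  refine ⟨M, ?_, hM.prop, fun i => hdataM ⟨i, rfl⟩⟩
  exact (hM.prop.isMonotoneGraph hμ.le).isMaximallyMonotoneGraph_of_forall_exists_add_eq
    (exists_mem_add_eq_of_maximal_isStronglyMonotoneGraph (by linarith) hM)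
end

section
/- Let H be a real Hilbert space, let β > 0, and let {(y_i, u_i)}_{i ∈ J} be a family of pairs in H × H. Then the following are equivalent: (i) there exists a β-cocoercive map G : H → H with G(y_i) = u_i for every i ∈ J; (ii) for all i, j ∈ J, ⟨u_i − u_j, y_i − y_j⟩ ≥ β‖u_i − u_j‖². -/
open scoped RealInnerProductSpace NNReal
open Filter Topology

/-!
A map `G` is `β`-cocoercive iff `T = 2β • G - id` is nonexpansive, so the theorem reduces to
Kirszbraun's extension theorem in a Hilbert space.

For finitely many data `‖b i - b j‖ ≤ K ‖a i - a j‖` and a new point `x`, take `v₀` minimizing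
`maxᵢ (‖v - b i‖² - K² ‖x - a i‖²)` over the convex hull of the `b i`. It is a convex combination
of the `b i` at which the maximum is attained, and comparing the weighted variances of the `a i`
and of the `b i` shows that this maximum is `≤ 0`. Closed balls of a Hilbert space have the finite
intersection property (the minimal-norm points of the finite intersections form a Cauchy net), so
every `K`-Lipschitz relation extends to any new point, and Zorn's lemma gives a total one.
-/

section Kirszbraun

variable {H : Type*} [NormedAddCommGroup H] [InnerProductSpace ℝ H]

theorem mul_norm_sq_le_inner_iff_norm_smul_sub_le {β : ℝ} (hβ : 0 < β) (g d : H) :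
    β * ‖g‖ ^ 2 ≤ ⟪g, d⟫ ↔ ‖(2 * β) • g - d‖ ≤ ‖d‖ := by
  have hexp : ‖(2 * β) • g - d‖ ^ 2 = ‖d‖ ^ 2 - 4 * β * (⟪g, d⟫ - β * ‖g‖ ^ 2) := by
    rw [norm_sub_sq_real, norm_smul, real_inner_smul_left, mul_pow, Real.norm_eq_abs, sq_abs]
    ring
  rw [← sq_le_sq₀ (norm_nonneg _) (norm_nonneg _), hexp, sub_le_self_iff,
    mul_nonneg_iff_of_pos_left (by positivity), sub_nonneg]

section WeightedSums

variable {ι : Type*} [Fintype ι] {w : ι → ℝ}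

theorem sum_mul_norm_sub_sq_eq (hw : ∑ i, w i = 1) (b : ι → H) (x : H) :
    ∑ i, w i * ‖b i - x‖ ^ 2 =
      ∑ i, w i * ‖b i - ∑ j, w j • b j‖ ^ 2 + ‖∑ j, w j • b j - x‖ ^ 2 := by
  set m := ∑ j, w j • b j
  have hcross : ∑ i, w i * ⟪b i - m, m - x⟫ = 0 := by
    have : ∑ i, w i • (b i - m) = 0 := by
      simp only [smul_sub, Finset.sum_sub_distrib, ← Finset.sum_smul, hw, one_smul, m, sub_self]
    simp only [← real_inner_smul_left, ← sum_inner, this, inner_zero_left]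
  calc ∑ i, w i * ‖b i - x‖ ^ 2
      = ∑ i, (w i * ‖b i - m‖ ^ 2 + 2 * (w i * ⟪b i - m, m - x⟫) + w i * ‖m - x‖ ^ 2) := by
        refine Finset.sum_congr rfl fun i _ => ?_
        rw [← sub_add_sub_cancel (b i) m x, norm_add_sq_real]
        ring
    _ = _ := by
        rw [Finset.sum_add_distrib, Finset.sum_add_distrib, ← Finset.mul_sum, hcross,
          ← Finset.sum_mul, hw]
        ring

theorem sum_sum_mul_norm_sub_sq_eq (hw : ∑ i, w i = 1) (b : ι → H) :
    ∑ i, ∑ j, w i * w j * ‖b i - b j‖ ^ 2 = 2 * ∑ i, w i * ‖b i - ∑ j, w j • b j‖ ^ 2 := by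
  set V := ∑ i, w i * ‖b i - ∑ j, w j • b j‖ ^ 2
  calc ∑ i, ∑ j, w i * w j * ‖b i - b j‖ ^ 2
      = ∑ i, w i * (V + ‖b i - ∑ j, w j • b j‖ ^ 2) := by
        refine Finset.sum_congr rfl fun i _ => ?_
        rw [norm_sub_rev (b i), ← sum_mul_norm_sub_sq_eq hw b (b i), Finset.mul_sum]
        exact Finset.sum_congr rfl fun j _ => by rw [norm_sub_rev (b i) (b j)]; ring
    _ = 2 * V := by
        simp only [mul_add, Finset.sum_add_distrib, ← Finset.sum_mul, hw]
        ring

theorem sum_mul_norm_sub_sq_le_of_norm_sub_le (hw₀ : ∀ i, 0 ≤ w i) (hw : ∑ i, w i = 1)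
    {a b : ι → H} {K : ℝ} (hab : ∀ i j, ‖b i - b j‖ ≤ K * ‖a i - a j‖) (x : H) :
    ∑ i, w i * ‖b i - ∑ j, w j • b j‖ ^ 2 ≤ K ^ 2 * ∑ i, w i * ‖a i - x‖ ^ 2 := by
  have hpair : ∑ i, ∑ j, w i * w j * ‖b i - b j‖ ^ 2 ≤
      K ^ 2 * ∑ i, ∑ j, w i * w j * ‖a i - a j‖ ^ 2 := by
    simp only [Finset.mul_sum]
    refine Finset.sum_le_sum fun i _ => Finset.sum_le_sum fun j _ => ?_
    calc w i * w j * ‖b i - b j‖ ^ 2 ≤ w i * w j * (K * ‖a i - a j‖) ^ 2 := by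
          have := mul_nonneg (hw₀ i) (hw₀ j)
          gcongr
          exact hab i j
      _ = _ := by ring
  rw [sum_sum_mul_norm_sub_sq_eq hw, sum_sum_mul_norm_sub_sq_eq hw] at hpair
  have hvar := sum_mul_norm_sub_sq_eq hw a x
  nlinarith [sq_nonneg K, sq_nonneg ‖∑ j, w j • a j - x‖]

end WeightedSums

theorem exists_mem_forall_inner_sub_neg_of_notMem {C : Set H} (hC : Convex ℝ C)
    (hCc : IsComplete C) (hne : C.Nonempty) {v : H} (hv : v ∉ C) :
    ∃ p ∈ C, ∀ z ∈ C, ⟪v - z, p - v⟫ < 0 := by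
  obtain ⟨p, hpC, hp⟩ := exists_norm_eq_iInf_of_complete_convex hne hCc hC v
  have hvar := (norm_eq_iInf_iff_real_inner_le_zero hC hpC).mp hp
  have hpv : 0 < ‖v - p‖ := norm_sub_pos_iff.mpr fun h => hv (h ▸ hpC)
  refine ⟨p, hpC, fun z hz => ?_⟩
  have hsplit : ⟪v - z, p - v⟫ = -‖v - p‖ ^ 2 + ⟪v - p, z - p⟫ := by
    rw [show v - z = (v - p) - (z - p) by abel, show p - v = -(v - p) by abel, inner_neg_right,
      inner_sub_left, real_inner_self_eq_norm_sq, real_inner_comm]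
    ring
  linarith [hvar z hz, pow_pos hpv 2]

theorem eventually_norm_add_smul_sub_sq_lt {v b e : H} {c : ℝ} (hle : ‖v - b‖ ^ 2 ≤ c)
    (hdir : ‖v - b‖ ^ 2 = c → ⟪v - b, e⟫ < 0) :
    ∀ᶠ t in 𝓝[>] (0 : ℝ), ‖v + t • e - b‖ ^ 2 < c := by
  rcases hle.lt_or_eq with hlt | heq
  · have hcont : Continuous fun t : ℝ => ‖v + t • e - b‖ ^ 2 := by fun_prop
    refine eventually_nhdsWithin_of_eventually_nhds ((hcont.tendsto 0).eventually_lt_const ?_)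
    simpa using hlt
  · have hlim : Tendsto (fun t : ℝ => 2 * ⟪v - b, e⟫ + t * ‖e‖ ^ 2) (𝓝 0)
        (𝓝 (2 * ⟪v - b, e⟫)) := by
      simpa using
        ((tendsto_id (x := 𝓝 (0 : ℝ))).mul_const (‖e‖ ^ 2)).const_add (2 * ⟪v - b, e⟫)
    have hslope : 2 * ⟪v - b, e⟫ < 0 := by linarith [hdir heq]
    filter_upwards [self_mem_nhdsWithin, eventually_nhdsWithin_of_eventually_nhds
      (hlim.eventually_lt_const hslope)] with t (ht : 0 < t) hneg
    have hexp : ‖v + t • e - b‖ ^ 2 = ‖v - b‖ ^ 2 + t * (2 * ⟪v - b, e⟫ + t * ‖e‖ ^ 2) := by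
      rw [add_sub_right_comm, norm_add_sq_real, real_inner_smul_right, norm_smul, mul_pow,
        Real.norm_eq_abs, sq_abs]
      ring
    rw [hexp, heq]
    nlinarith

theorem mem_convexHull_image_eq_of_forall_exists_le {ι : Type*} [Finite ι] {K : Set H}
    (hK : Convex ℝ K) {b : ι → H} (hbK : ∀ i, b i ∈ K) {c : ι → ℝ} {v₀ : H} (hv₀K : v₀ ∈ K)
    (hv₀ : ∀ i, ‖v₀ - b i‖ ^ 2 ≤ c i) (hmin : ∀ v ∈ K, ∃ i, c i ≤ ‖v - b i‖ ^ 2) :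
    v₀ ∈ convexHull ℝ (b '' {i | ‖v₀ - b i‖ ^ 2 = c i}) := by
  set C := convexHull ℝ (b '' {i | ‖v₀ - b i‖ ^ 2 = c i})
  -- Otherwise a small step from `v₀` towards its projection onto `C` stays in `K` and satisfies
  -- every constraint strictly: the tight ones decrease to first order, the slack ones stay slack.
  by_contra hv₀C
  have hCne : C.Nonempty := by
    obtain ⟨i, hi⟩ := hmin v₀ hv₀K
    exact ⟨b i, subset_convexHull ℝ _ ⟨i, (hv₀ i).antisymm hi, rfl⟩⟩
  have hCc : IsComplete C := ((Set.toFinite _).isCompact_convexHull (𝕜 := ℝ)).isComplete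
  obtain ⟨p, hpC, hp⟩ :=
    exists_mem_forall_inner_sub_neg_of_notMem (convex_convexHull ℝ _) hCc hCne hv₀C
  have hpK : p ∈ K := convexHull_min (Set.image_subset_iff.mpr fun i _ => hbK i) hK hpC
  have hsmall : ∀ᶠ t in 𝓝[>] (0 : ℝ), t ∈ Set.Ioo 0 1 := Ioo_mem_nhdsGT one_pos
  obtain ⟨t, ⟨ht₀, ht₁⟩, ht⟩ := (hsmall.and (eventually_all.mpr fun i =>
    eventually_norm_add_smul_sub_sq_lt (hv₀ i) fun hi =>
      hp _ (subset_convexHull ℝ _ ⟨i, hi, rfl⟩))).exists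
  obtain ⟨i, hi⟩ := hmin _ (hK.add_smul_sub_mem hv₀K hpK ⟨ht₀.le, ht₁.le⟩)
  exact (hi.trans_lt (ht i)).false

theorem nonpos_of_mem_convexHull_image_eq {ι : Type*} {a b : ι → H} {K : ℝ}
    (hab : ∀ i j, ‖b i - b j‖ ≤ K * ‖a i - a j‖) (x v₀ : H) {μ : ℝ}
    (hv₀ : v₀ ∈ convexHull ℝ (b '' {i | ‖v₀ - b i‖ ^ 2 = (K * ‖x - a i‖) ^ 2 + μ})) :
    μ ≤ 0 := by
  obtain ⟨κ, _, w, z, hw₀, hw, hz, hv₀⟩ := mem_convexHull_iff_exists_fintype.mp hv₀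
  choose idx hidx hbidx using hz
  have hcmp := sum_mul_norm_sub_sq_le_of_norm_sub_le hw₀ hw (a := a ∘ idx) (b := b ∘ idx)
    (fun k l => hab _ _) x
  simp only [Function.comp_apply, hbidx, hv₀] at hcmp
  have htight : ∑ k, w k * ‖z k - v₀‖ ^ 2 =
      K ^ 2 * ∑ k, w k * ‖a (idx k) - x‖ ^ 2 + μ := by
    calc ∑ k, w k * ‖z k - v₀‖ ^ 2
        = ∑ k, (K ^ 2 * (w k * ‖a (idx k) - x‖ ^ 2) + w k * μ) := by
          refine Finset.sum_congr rfl fun k _ => ?_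
          rw [← hbidx, norm_sub_rev, hidx k, norm_sub_rev x]
          ring
      _ = _ := by rw [Finset.sum_add_distrib, ← Finset.mul_sum, ← Finset.sum_mul, hw, one_mul]
  linarith

theorem exists_forall_norm_sub_le_of_finite {ι : Type*} [Finite ι] {a b : ι → H} {K : ℝ≥0}
    (hab : ∀ i j, ‖b i - b j‖ ≤ K * ‖a i - a j‖) (x : H) :
    ∃ v, ∀ i, ‖v - b i‖ ≤ K * ‖x - a i‖ := by
  cases isEmpty_or_nonempty ι
  · exact ⟨0, isEmptyElim⟩
  cases nonempty_fintype ι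
  let f : ι → H → ℝ := fun i v => ‖v - b i‖ ^ 2 - (K * ‖x - a i‖) ^ 2
  let g : H → ℝ := fun v => Finset.univ.sup' Finset.univ_nonempty fun i => f i v
  have hg : Continuous g := Continuous.finset_sup'_apply _ fun i _ => by fun_prop
  obtain ⟨v₀, hv₀S, hv₀min⟩ :=
    ((Set.finite_range b).isCompact_convexHull (𝕜 := ℝ)).exists_isMinOn
      ((Set.range_nonempty b).mono (subset_convexHull ℝ _)) hg.continuousOn
  have hle : ∀ i, ‖v₀ - b i‖ ^ 2 ≤ (K * ‖x - a i‖) ^ 2 + g v₀ := fun i => by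
    have : f i v₀ ≤ g v₀ := Finset.le_sup' (fun i => f i v₀) (Finset.mem_univ i)
    linarith
  have hmin : ∀ v ∈ convexHull ℝ (Set.range b),
      ∃ i, (K * ‖x - a i‖) ^ 2 + g v₀ ≤ ‖v - b i‖ ^ 2 := fun v hv => by
    obtain ⟨i, -, hi⟩ : ∃ i ∈ Finset.univ, g v = f i v :=
      Finset.exists_mem_eq_sup' Finset.univ_nonempty fun i => f i v
    exact ⟨i, by linarith [isMinOn_iff.mp hv₀min v hv]⟩
  have hμ : g v₀ ≤ 0 := nonpos_of_mem_convexHull_image_eq hab x v₀ <|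
    mem_convexHull_image_eq_of_forall_exists_le (convex_convexHull ℝ _)
      (fun i => subset_convexHull ℝ _ (Set.mem_range_self i)) hv₀S hle hmin
  refine ⟨v₀, fun i => (sq_le_sq₀ (norm_nonneg _) (by positivity)).mp ?_⟩
  linarith [hle i]

theorem norm_sub_sq_add_norm_sub_sq_le_of_norm_eq_iInf {K : Set H} (hK : Convex ℝ K)
    {u v w : H} (hv : v ∈ K) (hmin : ‖u - v‖ = ⨅ w : K, ‖u - w‖) (hw : w ∈ K) :
    ‖u - v‖ ^ 2 + ‖w - v‖ ^ 2 ≤ ‖u - w‖ ^ 2 := by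
  have := (norm_eq_iInf_iff_real_inner_le_zero hK hv).mp hmin w hw
  rw [← sub_sub_sub_cancel_right u w v, norm_sub_sq_real (u - v)]
  linarith

theorem cauchySeq_of_norm_sq_add_norm_sub_sq_le {E ι : Type*} [SeminormedAddCommGroup E]
    [SemilatticeSup ι] [Nonempty ι] {p : ι → E}
    (hp : ∀ s t, s ≤ t → ‖p s‖ ^ 2 + ‖p t - p s‖ ^ 2 ≤ ‖p t‖ ^ 2)
    (hbdd : BddAbove (Set.range fun s => ‖p s‖ ^ 2)) : CauchySeq p := by
  rw [Metric.cauchySeq_iff']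
  intro ε hε
  obtain ⟨N, hN⟩ := exists_lt_of_lt_ciSup (sub_lt_self (⨆ s, ‖p s‖ ^ 2) (pow_pos hε 2))
  refine ⟨N, fun n hn => ?_⟩
  rw [dist_eq_norm, ← sq_lt_sq₀ (norm_nonneg _) hε.le]
  linarith [hp N n hn, le_ciSup hbdd n]

section LipschitzRel

variable {E : Type*} [SeminormedAddCommGroup E] {K : ℝ≥0}

/-- Relations rather than partial maps, so that a chain of them has its union as upper bound. -/
def IsLipschitzRel (K : ℝ≥0) (M : Set (E × E)) : Prop :=
  ∀ p ∈ M, ∀ q ∈ M, ‖p.2 - q.2‖ ≤ K * ‖p.1 - q.1‖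

theorem IsLipschitzRel.sUnion {c : Set (Set (E × E))} (hc : IsChain (· ⊆ ·) c)
    (hM : ∀ M ∈ c, IsLipschitzRel K M) : IsLipschitzRel K (⋃₀ c) := by
  rintro p ⟨M, hMc, hpM⟩ q ⟨N, hNc, hqN⟩
  rcases hc.total hMc hNc with hMN | hNM
  · exact hM N hNc p (hMN hpM) q hqN
  · exact hM M hMc p hpM q (hNM hqN)

theorem IsLipschitzRel.insert_of_forall {M : Set (E × E)} (hM : IsLipschitzRel K M) {x v : E}
    (hv : ∀ q ∈ M, ‖v - q.2‖ ≤ K * ‖x - q.1‖) : IsLipschitzRel K (insert (x, v) M) := by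
  rintro p (rfl | hp) q (rfl | hq)
  · simp
  · exact hv q hq
  · rw [norm_sub_rev, norm_sub_rev p.1]
    exact hv p hp
  · exact hM p hp q hq

end LipschitzRel

variable [CompleteSpace H]

theorem nonempty_iInter_of_nonempty_biInter_finset {ι : Type*} {C : ι → Set H}
    (hC : ∀ i, IsClosed (C i)) (hconv : ∀ i, Convex ℝ (C i)) {i₀ : ι}
    (hbdd : Bornology.IsBounded (C i₀)) (hfin : ∀ s : Finset ι, (⋂ i ∈ s, C i).Nonempty) :
    (⋂ i, C i).Nonempty := by
  classical
  let D : Finset ι → Set H := fun s => ⋂ i ∈ s, C i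
  have hDconv : ∀ s, Convex ℝ (D s) := fun s => convex_iInter₂ fun i _ => hconv i
  have hDanti : Antitone D := fun s t hst => Set.biInter_subset_biInter_left hst
  have hproj : ∀ s, ∃ p ∈ D s, ‖0 - p‖ = ⨅ w : D s, ‖0 - (w : H)‖ := fun s =>
    exists_norm_eq_iInf_of_complete_convex (hfin s) (isClosed_biInter fun i _ => hC i).isComplete
      (hDconv s) 0
  choose p hpD hpmin using hproj
  have hp : ∀ s t, s ≤ t → ‖p s‖ ^ 2 + ‖p t - p s‖ ^ 2 ≤ ‖p t‖ ^ 2 := fun s t hst => by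
    simpa using norm_sub_sq_add_norm_sub_sq_le_of_norm_eq_iInf (hDconv s) (hpD s) (hpmin s)
      (hDanti hst (hpD t))
  obtain ⟨R, hR⟩ := hbdd.subset_closedBall 0
  have hpR : ∀ s, ‖p s‖ ^ 2 ≤ R ^ 2 := fun s => by
    have hmem : p (insert i₀ s) ∈ C i₀ :=
      Set.mem_iInter₂.mp (hpD _) i₀ (Finset.mem_insert_self _ _)
    have hle : ‖p (insert i₀ s)‖ ≤ R := mem_closedBall_zero_iff.mp (hR hmem)
    linarith [hp s _ (Finset.subset_insert i₀ s), pow_le_pow_left₀ (norm_nonneg _) hle 2,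
      sq_nonneg ‖p (insert i₀ s) - p s‖]
  obtain ⟨v, hv⟩ := cauchySeq_tendsto_of_complete
    (cauchySeq_of_norm_sq_add_norm_sub_sq_le hp ⟨R ^ 2, Set.forall_mem_range.mpr hpR⟩)
  refine ⟨v, Set.mem_iInter.mpr fun i => (hC i).mem_of_tendsto hv ?_⟩
  filter_upwards [eventually_ge_atTop {i}] with s hs
  exact Set.mem_iInter₂.mp (hpD s) i (hs (Finset.mem_singleton_self i))

theorem IsLipschitzRel.exists_insert {K : ℝ≥0} {M : Set (H × H)} (hM : IsLipschitzRel K M)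
    (x : H) : ∃ v, IsLipschitzRel K (insert (x, v) M) := by
  rcases M.eq_empty_or_nonempty with rfl | ⟨q₀, hq₀⟩
  · exact ⟨0, hM.insert_of_forall fun q hq => hq.elim⟩
  obtain ⟨v, hv⟩ := nonempty_iInter_of_nonempty_biInter_finset
    (C := fun q : M => Metric.closedBall (q : H × H).2 (K * ‖x - (q : H × H).1‖))
    (fun _ => Metric.isClosed_closedBall) (fun _ => convex_closedBall _ _) (i₀ := ⟨q₀, hq₀⟩)
    Metric.isBounded_closedBall fun s => by
      obtain ⟨v, hv⟩ := exists_forall_norm_sub_le_of_finite (a := fun q : s => (q : M).1.1)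
        (b := fun q : s => (q : M).1.2) (fun q q' => hM _ q.1.2 _ q'.1.2) x
      exact ⟨v, Set.mem_iInter₂.mpr fun q hq => mem_closedBall_iff_norm.mpr (hv ⟨q, hq⟩)⟩
  exact ⟨v, hM.insert_of_forall fun q hq =>
    mem_closedBall_iff_norm.mp (Set.mem_iInter.mp hv ⟨q, hq⟩)⟩

theorem exists_lipschitzWith_forall_apply_eq {J : Type*} {a b : J → H} {K : ℝ≥0}
    (hab : ∀ i j, ‖b i - b j‖ ≤ K * ‖a i - a j‖) :
    ∃ T : H → H, LipschitzWith K T ∧ ∀ i, T (a i) = b i := by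
  obtain ⟨M, hM₀, hMmax⟩ := zorn_subset_nonempty {M : Set (H × H) | IsLipschitzRel K M}
    (fun c hcS hc _ => ⟨⋃₀ c, IsLipschitzRel.sUnion hc hcS, fun _ => Set.subset_sUnion_of_mem⟩)
    (Set.range fun i => (a i, b i)) (by rintro _ ⟨i, rfl⟩ _ ⟨j, rfl⟩; exact hab i j)
  have hM : IsLipschitzRel K M := hMmax.prop
  have htotal : ∀ x, ∃ v, (x, v) ∈ M := fun x => by
    obtain ⟨v, hv⟩ := hM.exists_insert x
    refine ⟨v, ?_⟩
    rw [hMmax.eq_of_subset hv (Set.subset_insert _ _)]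
    exact Set.mem_insert _ _
  choose T hT using htotal
  refine ⟨T, lipschitzWith_iff_norm_sub_le.mpr fun x z => hM _ (hT x) _ (hT z), fun i => ?_⟩
  simpa [sub_eq_zero] using hM _ (hT (a i)) _ (hM₀ ⟨i, rfl⟩)

end Kirszbraun

/-- Interpolation theorem for `β`-cocoercive operators on a real Hilbert space. -/
theorem cocoercive_interpolation
    {H : Type*} [NormedAddCommGroup H] [InnerProductSpace ℝ H] [CompleteSpace H]
    (β : ℝ) (hβ : 0 < β) {J : Type*} (y u : J → H) :
    (∃ G : H → H, (∀ x z : H, β * ‖G x - G z‖ ^ 2 ≤ ⟪G x - G z, x - z⟫) ∧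
        ∀ i, G (y i) = u i) ↔
    (∀ i j, β * ‖u i - u j‖ ^ 2 ≤ ⟪u i - u j, y i - y j⟫) := by
  refine ⟨fun ⟨G, hG, hGy⟩ i j => by simpa only [hGy] using hG (y i) (y j), fun h => ?_⟩
  have hβ₂ : 2 * β ≠ 0 := by positivity
  obtain ⟨T, hT, hTy⟩ := exists_lipschitzWith_forall_apply_eq (K := 1) (a := y)
    (b := fun i => (2 * β) • u i - y i) fun i j => by
      rw [NNReal.coe_one, one_mul, sub_sub_sub_comm, ← smul_sub]
      exact (mul_norm_sq_le_inner_iff_norm_smul_sub_le hβ _ _).mp (h i j)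
  refine ⟨fun x => (2 * β)⁻¹ • (x + T x), fun x z => ?_, fun i => ?_⟩
  · rw [mul_norm_sq_le_inner_iff_norm_smul_sub_le hβ, ← smul_sub, smul_inv_smul₀ hβ₂,
      add_sub_add_comm, add_sub_cancel_left]
    simpa using lipschitzWith_iff_norm_sub_le.mp hT x z
  · simp only [hTy, add_sub_cancel, inv_smul_smul₀ hβ₂]
end
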